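/- For m = 4 and every singleton A = {a} with a ∈ {1,2,3,4}, the formal power series identity G_{A,A}(t) · (1 + t³)(1 − t⁴) = 1 + t³ + t⁵ holds in ℤ[[t]]; equivalently, G_{A,A}(t) = (1 + t³ + t⁵)/((1 + t³)(1 − t⁴)). -/

import Mathlib

/-- Adjacency in the square grid graph on ℤ²: `v` and `w` are adjacent iff
`|v₁ − w₁| + |v₂ − w₂| = 1`. -/
def gridAdj (v w : ℤ × ℤ) : Prop :=
  (v.1 - w.1).natAbs + (v.2 - w.2).natAbs = 1

/-- `σ` is an `(A,B)`-configuration on the parallelogram `P_{m,n}`: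
an independent set of the induced subgraph of the grid on
`{(a,b) : 1 ≤ a ≤ m, 1 − a < b ≤ 1 − a + n}` whose trace on the left boundary
`{(a, 2−a)}` is prescribed by `A` and on the right boundary `{(a, 1−a+n)}`
by `B`. -/
def ParaConfig (m n : ℕ) (A B : Finset ℕ) (σ : Finset (ℤ × ℤ)) : Prop :=
  (∀ p ∈ σ, 1 ≤ p.1 ∧ p.1 ≤ (m : ℤ) ∧ 1 - p.1 < p.2 ∧ p.2 ≤ 1 - p.1 + (n : ℤ)) ∧
  (∀ v ∈ σ, ∀ w ∈ σ, ¬ gridAdj v w) ∧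
  (∀ a : ℕ, 1 ≤ a → a ≤ m →
    ((((a : ℤ), 2 - (a : ℤ)) ∈ σ ↔ a ∈ A) ∧
     (((a : ℤ), 1 - (a : ℤ) + (n : ℤ)) ∈ σ ↔ a ∈ B)))

/-- `Z(P_{m,n}(A,B)) = Σ_σ (−1)^{|σ|}` over all `(A,B)`-configurations `σ`. -/
noncomputable def Zpara (m n : ℕ) (A B : Finset ℕ) : ℤ :=
  ∑ᶠ σ ∈ {σ : Finset (ℤ × ℤ) | ParaConfig m n A B σ}, (-1 : ℤ) ^ σ.card

/-- The generating function
`G_{A,A}(t) = 1 + (−1)^{|A|} Σ_{n ≥ 1} Z(P_{m,n+1}(A,A)) tⁿ ∈ ℤ[[t]]`. -/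
noncomputable def Gser (m : ℕ) (A : Finset ℕ) : PowerSeries ℤ :=
  PowerSeries.mk fun k => if k = 0 then 1 else (-1 : ℤ) ^ A.card * Zpara m (k + 1) A A

/-! Cutting `P_{m,n+1}` along its last diagonal `a + b = n + 2` splits a configuration uniquely
into a configuration of `P_{m,n}` and a set of points on that diagonal compatible with the trace
on the diagonal before it. So `Z(P_{m,n+1}(A,·))` arises from `Z(P_{m,n}(A,·))` by a fixed
linear transfer operator `T` on functions of subsets of `{1,…,m}`, and the `k`-th coefficient of
`G_{A,A}` is `(Tᵏ δ_A)(A)`. For `m = 4` and `A = {a}` a finite computation gives the first nine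
coefficients and `(T⁹ + T⁶ - T⁵ - T²) δ_A = 0` on subsets of `{1,…,4}`; this recurrence is exactly
what multiplying by `(1 + t³)(1 - t⁴) = 1 + t³ - t⁴ - t⁷` needs. -/

open Finset PowerSeries

/-- The point `(x, 1 - x + n)` of a diagonal is adjacent to exactly `(x, 2 - x + n)` and
`(x + 1, 1 - x + n)` on the next one, so this is how the traces `C`, `B` of an independent set on
consecutive diagonals interact. -/
def Compatible (C B : Finset ℕ) : Prop := ∀ x ∈ C, x ∉ B ∧ x + 1 ∉ B

instance : DecidableRel Compatible := fun C B =>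
  inferInstanceAs (Decidable (∀ x ∈ C, x ∉ B ∧ x + 1 ∉ B))

def transfer (m : ℕ) : (Finset ℕ → ℤ) →+ (Finset ℕ → ℤ) where
  toFun f B := (-1) ^ #B * ∑ C ∈ (Icc 1 m).powerset, if Compatible C B then f C else 0
  map_zero' := by
    ext B
    simp
  map_add' f g := by
    ext B
    simp only [Pi.add_apply, ← mul_add, ← sum_add_distrib, ite_add_ite, add_zero]

section Transfer

variable {m : ℕ}

theorem transfer_apply (f : Finset ℕ → ℤ) (B : Finset ℕ) :
    transfer m f B = (-1) ^ #B * ∑ C ∈ (Icc 1 m).powerset, if Compatible C B then f C else 0 :=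
  rfl

theorem transfer_congr {f g : Finset ℕ → ℤ} (h : ∀ C ⊆ Icc 1 m, f C = g C) :
    transfer m f = transfer m g := by
  ext B
  simp only [transfer_apply]
  congr 1
  exact sum_congr rfl fun C hC => by rw [h C (mem_powerset.1 hC)]

theorem iterate_transfer_add_eq {f : Finset ℕ → ℤ} {p q r s : ℕ}
    (h : ∀ B ⊆ Icc 1 m, (transfer m)^[p] f B + (transfer m)^[q] f B =
      (transfer m)^[r] f B + (transfer m)^[s] f B) (k : ℕ) :
    ∀ B ⊆ Icc 1 m, (transfer m)^[k + p] f B + (transfer m)^[k + q] f B =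
      (transfer m)^[k + r] f B + (transfer m)^[k + s] f B := by
  induction k with
  | zero => simpa using h
  | succ k ih =>
    intro B _
    have step := transfer_congr (f := (transfer m)^[k + p] f + (transfer m)^[k + q] f)
      (g := (transfer m)^[k + r] f + (transfer m)^[k + s] f) ih
    simpa only [add_right_comm k 1, Function.iterate_succ_apply', map_add, Pi.add_apply] using
      congrFun step B

end Transfer

theorem gridAdj_symm {v w : ℤ × ℤ} (h : gridAdj v w) : gridAdj w v := by
  unfold gridAdj at *
  omega

theorem not_gridAdj_of_add_eq {v w : ℤ × ℤ} (h : v.1 + v.2 = w.1 + w.2) : ¬ gridAdj v w := by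
  unfold gridAdj
  omega

def diagonal (n : ℕ) (B : Finset ℕ) : Finset (ℤ × ℤ) :=
  B.image fun x : ℕ => ((x : ℤ), 1 - (x : ℤ) + n)

section Diagonal

variable {n : ℕ} {B : Finset ℕ}

theorem mk_mem_diagonal {x : ℕ} {y : ℤ} (h : x + y = 1 + n) :
    ((x : ℤ), y) ∈ diagonal n B ↔ x ∈ B := by
  simp only [diagonal, mem_image, Prod.ext_iff, Nat.cast_inj]
  exact ⟨fun ⟨_, hx, rfl, _⟩ => hx, fun hx => ⟨x, hx, rfl, by omega⟩⟩

theorem add_eq_of_mem_diagonal {p : ℤ × ℤ} (hp : p ∈ diagonal n B) : p.1 + p.2 = 1 + n := by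
  obtain ⟨x, -, rfl⟩ := mem_image.1 hp
  dsimp only
  ring

theorem card_diagonal : #(diagonal n B) = #B :=
  card_image_of_injective _ fun x y h => by simpa using congrArg Prod.fst h

end Diagonal

def diagonalTrace (m n : ℕ) (σ : Finset (ℤ × ℤ)) : Finset ℕ :=
  (Icc 1 m).filter fun x : ℕ => ((x : ℤ), 1 - (x : ℤ) + n) ∈ σ

def truncate (n : ℕ) (σ : Finset (ℤ × ℤ)) : Finset (ℤ × ℤ) :=
  σ.filter fun p => p.1 + p.2 ≤ 1 + n

theorem disjoint_truncate_diagonal_succ (n : ℕ) (σ : Finset (ℤ × ℤ)) (B : Finset ℕ) :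
    Disjoint (truncate n σ) (diagonal (n + 1) B) := by
  refine disjoint_left.2 fun p hp hp' => ?_
  have := add_eq_of_mem_diagonal hp'
  have := (mem_filter.1 hp).2
  push_cast at *
  omega

theorem diagonalTrace_union_diagonal_succ (m n : ℕ) (τ : Finset (ℤ × ℤ)) (B : Finset ℕ) :
    diagonalTrace m n (τ ∪ diagonal (n + 1) B) = diagonalTrace m n τ := by
  refine filter_congr fun x _ => ?_
  rw [mem_union, or_iff_left_iff_imp]
  intro hx
  have := add_eq_of_mem_diagonal hx
  push_cast at this
  omega

namespace ParaConfig

variable {m n : ℕ} {A B C : Finset ℕ} {σ τ : Finset (ℤ × ℤ)}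

theorem setOf_finite (m n : ℕ) (A B : Finset ℕ) :
    {σ : Finset (ℤ × ℤ) | ParaConfig m n A B σ}.Finite := by
  refine (Icc (1 : ℤ) m ×ˢ Icc (2 - (m : ℤ)) n).powerset.finite_toSet.subset fun σ hσ => ?_
  simp only [coe_powerset, Set.mem_preimage, Set.mem_powerset_iff, coe_subset]
  intro p hp
  have := hσ.1 p hp
  simp only [mem_product, mem_Icc]
  omega

theorem diagonal_subset (hσ : ParaConfig m n A B σ) (hB : B ⊆ Icc 1 m) : diagonal n B ⊆ σ := by
  intro p hp
  obtain ⟨x, hx, rfl⟩ := mem_image.1 hp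
  have hxm := mem_Icc.1 (hB hx)
  exact ((hσ.2.2 x hxm.1 hxm.2).2).2 hx

theorem mem_diagonal_of_mem (hσ : ParaConfig m n A B σ) {p : ℤ × ℤ} (hp : p ∈ σ)
    (hsum : p.1 + p.2 = 1 + n) : p ∈ diagonal n B := by
  obtain ⟨x, y⟩ := p
  obtain ⟨h1, h2, -, -⟩ := hσ.1 _ hp
  lift x to ℕ using by omega
  rw [mk_mem_diagonal hsum]
  exact ((hσ.2.2 x (by omega) (by omega)).2).1 (by convert hp using 2; omega)

theorem diagonalTrace_eq (hσ : ParaConfig m n A C σ) (hC : C ⊆ Icc 1 m) :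
    diagonalTrace m n σ = C := by
  ext x
  rw [diagonalTrace, mem_filter]
  exact ⟨fun ⟨hx, h⟩ => ((hσ.2.2 x (mem_Icc.1 hx).1 (mem_Icc.1 hx).2).2).1 h,
    fun h => ⟨hC h, ((hσ.2.2 x (mem_Icc.1 (hC h)).1 (mem_Icc.1 (hC h)).2).2).2 h⟩⟩

theorem compatible_diagonalTrace (hσ : ParaConfig m (n + 1) A B σ) (hB : B ⊆ Icc 1 m) :
    Compatible (diagonalTrace m n σ) B := by
  intro x hx
  obtain ⟨hxm, hxσ⟩ := mem_filter.1 hx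
  have hind := hσ.2.1 _ hxσ
  refine ⟨fun hxB => hind _ (diagonal_subset hσ hB (mem_image_of_mem _ hxB)) ?_,
    fun hxB => hind _ (diagonal_subset hσ hB (mem_image_of_mem _ hxB)) ?_⟩ <;>
  · simp only [gridAdj]
    push_cast
    omega

theorem paraConfig_truncate (hσ : ParaConfig m (n + 1) A B σ) (hn : 1 ≤ n) :
    ParaConfig m n A (diagonalTrace m n σ) (truncate n σ) := by
  refine ⟨fun p hp => ?_, fun v hv w hw => hσ.2.1 v (mem_filter.1 hv).1 w (mem_filter.1 hw).1,
    fun x hx1 hxm => ⟨?_, ?_⟩⟩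
  · have := hσ.1 p (mem_filter.1 hp).1
    have := (mem_filter.1 hp).2
    push_cast at *
    omega
  · rw [truncate, mem_filter, ← (hσ.2.2 x hx1 hxm).1, and_iff_left_iff_imp]
    intro
    omega
  · rw [truncate, mem_filter, diagonalTrace, mem_filter, mem_Icc]
    exact ⟨fun h => ⟨⟨hx1, hxm⟩, h.1⟩, fun h => ⟨h.2, by omega⟩⟩

theorem union_diagonal_succ (hn : 1 ≤ n) (hB : B ⊆ Icc 1 m) (hCB : Compatible C B)
    (hτ : ParaConfig m n A C τ) : ParaConfig m (n + 1) A B (τ ∪ diagonal (n + 1) B) := by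
  have not_adj : ∀ v ∈ τ, ∀ q ∈ diagonal (n + 1) B, ¬ gridAdj v q := by
    intro v hv q hq hadj
    obtain ⟨y, hyB, rfl⟩ := mem_image.1 hq
    obtain ⟨a, b⟩ := v
    obtain ⟨h1, h2, h3, h4⟩ := hτ.1 _ hv
    simp only [gridAdj] at hadj h1 h2 h3 h4
    push_cast at hadj
    -- `v` lies on diagonal `n`, either in the same row as `q` or in the row above it
    rcases (by omega : (a = y ∧ b = 1 - y + n) ∨ (a = ((y - 1 : ℕ) : ℤ) ∧
        b = 1 - ((y - 1 : ℕ) : ℤ) + n)) with ⟨rfl, rfl⟩ | ⟨rfl, rfl⟩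
    · exact (hCB y (((hτ.2.2 y (by omega) (by omega)).2).1 hv)).1 hyB
    · have hy : y - 1 + 1 = y := by omega
      exact (hCB (y - 1) (((hτ.2.2 (y - 1) (by omega) (by omega)).2).1 hv)).2 (hy ▸ hyB)
  refine ⟨fun p hp => ?_, fun v hv w hw => ?_, fun x hx1 hxm => ⟨?_, ?_⟩⟩
  · rcases mem_union.1 hp with hp | hp
    · have := hτ.1 p hp
      push_cast
      omega
    · obtain ⟨x, hx, rfl⟩ := mem_image.1 hp
      have := mem_Icc.1 (hB hx)
      push_cast
      omega
  · rcases mem_union.1 hv with hv | hv <;> rcases mem_union.1 hw with hw | hw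
    · exact hτ.2.1 v hv w hw
    · exact not_adj v hv w hw
    · exact fun h => not_adj w hw v hv (gridAdj_symm h)
    · exact not_gridAdj_of_add_eq
        ((add_eq_of_mem_diagonal hv).trans (add_eq_of_mem_diagonal hw).symm)
  · rw [mem_union, ← (hτ.2.2 x hx1 hxm).1, or_iff_left_iff_imp]
    intro h
    have := add_eq_of_mem_diagonal h
    push_cast at this
    omega
  · rw [mem_union, mk_mem_diagonal (by ring), or_iff_right_iff_imp]
    intro h
    have := hτ.1 _ h
    push_cast at this
    omega

theorem truncate_union_diagonal_succ (hτ : ParaConfig m n A C τ) :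
    truncate n (τ ∪ diagonal (n + 1) B) = τ := by
  rw [truncate, filter_union, filter_true_of_mem fun p hp => by have := hτ.1 p hp; omega,
    filter_false_of_mem fun p hp => by have := add_eq_of_mem_diagonal hp; push_cast at this; omega,
    union_empty]

theorem truncate_union_diagonal_succ_eq (hσ : ParaConfig m (n + 1) A B σ) (hB : B ⊆ Icc 1 m) :
    truncate n σ ∪ diagonal (n + 1) B = σ := by
  refine subset_antisymm (union_subset (filter_subset _ _) (diagonal_subset hσ hB)) fun p hp => ?_
  have := hσ.1 p hp
  rw [mem_union, truncate, mem_filter]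
  by_cases hle : p.1 + p.2 ≤ 1 + n
  · exact Or.inl ⟨hp, hle⟩
  · exact Or.inr (mem_diagonal_of_mem hσ hp (by push_cast at *; omega))

theorem one_iff (hA : A ⊆ Icc 1 m) (hC : C ⊆ Icc 1 m) :
    ParaConfig m 1 A C σ ↔ C = A ∧ σ = diagonal 1 A := by
  constructor
  · intro hσ
    have hCA : C = A := by
      ext x
      have key (hx : x ∈ Icc 1 m) : x ∈ C ↔ x ∈ A := by
        have h := hσ.2.2 x (mem_Icc.1 hx).1 (mem_Icc.1 hx).2
        rw [← h.1, ← h.2, show (1 : ℤ) - x + ((1 : ℕ) : ℤ) = 2 - x by push_cast; ring]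
      exact ⟨fun h => (key (hC h)).1 h, fun h => (key (hA h)).2 h⟩
    subst hCA
    refine ⟨rfl, subset_antisymm (fun p hp => mem_diagonal_of_mem hσ hp ?_) (diagonal_subset hσ hC)⟩
    have := hσ.1 p hp
    push_cast at *
    omega
  · rintro ⟨rfl, rfl⟩
    refine ⟨fun p hp => ?_, fun v hv w hw => not_gridAdj_of_add_eq ((add_eq_of_mem_diagonal hv).trans
      (add_eq_of_mem_diagonal hw).symm), fun x _ _ => ⟨mk_mem_diagonal (by push_cast; ring),
      mk_mem_diagonal (by ring)⟩⟩
    obtain ⟨x, hx, rfl⟩ := mem_image.1 hp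
    have := mem_Icc.1 (hA hx)
    push_cast
    omega

end ParaConfig

section Zpara

variable {m n : ℕ} {A B C : Finset ℕ}

theorem Zpara_eq_sum (m n : ℕ) (A B : Finset ℕ) :
    Zpara m n A B = ∑ σ ∈ (ParaConfig.setOf_finite m n A B).toFinset, (-1) ^ #σ :=
  finsum_mem_eq_finite_toFinset_sum _ _

theorem Zpara_one (hA : A ⊆ Icc 1 m) (hC : C ⊆ Icc 1 m) :
    Zpara m 1 A C = if C = A then (-1) ^ #A else 0 := by
  have hset : {σ | ParaConfig m 1 A C σ} = if C = A then {diagonal 1 A} else ∅ := by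
    split_ifs with h
    · subst h
      ext σ
      simp [ParaConfig.one_iff hA hC]
    · ext σ
      simp [ParaConfig.one_iff hA hC, h]
  rw [Zpara, hset]
  split_ifs
  · rw [finsum_mem_singleton, card_diagonal]
  · exact finsum_mem_empty

theorem Zpara_succ (hn : 1 ≤ n) (hB : B ⊆ Icc 1 m) :
    Zpara m (n + 1) A B = transfer m (Zpara m n A) B := by
  rw [Zpara_eq_sum, transfer_apply, mul_sum, ← sum_fiberwise_of_maps_to (g := diagonalTrace m n)
    (t := (Icc 1 m).powerset) fun σ _ => mem_powerset.2 (filter_subset _ _)]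
  refine sum_congr rfl fun C hC => ?_
  split_ifs with hCB
  · rw [Zpara_eq_sum, mul_sum]
    refine sum_nbij' (truncate n) (· ∪ diagonal (n + 1) B) ?_ ?_ ?_ ?_ ?_
    · intro σ hσ
      rw [mem_filter, Set.Finite.mem_toFinset] at hσ
      obtain ⟨hσ, rfl⟩ := hσ
      rw [Set.Finite.mem_toFinset]
      exact hσ.paraConfig_truncate hn
    · intro τ hτ
      rw [Set.Finite.mem_toFinset] at hτ
      rw [mem_filter, Set.Finite.mem_toFinset, diagonalTrace_union_diagonal_succ,
        hτ.diagonalTrace_eq (mem_powerset.1 hC)]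
      exact ⟨hτ.union_diagonal_succ hn hB hCB, rfl⟩
    · intro σ hσ
      rw [mem_filter, Set.Finite.mem_toFinset] at hσ
      exact hσ.1.truncate_union_diagonal_succ_eq hB
    · intro τ hτ
      rw [Set.Finite.mem_toFinset] at hτ
      exact hτ.truncate_union_diagonal_succ
    · intro σ hσ
      rw [mem_filter, Set.Finite.mem_toFinset] at hσ
      conv_lhs => rw [← hσ.1.truncate_union_diagonal_succ_eq hB]
      rw [card_union_of_disjoint (disjoint_truncate_diagonal_succ n σ B), card_diagonal, pow_add,
        mul_comm]
  · rw [mul_zero]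
    refine sum_eq_zero fun σ hσ => absurd ?_ hCB
    rw [mem_filter, Set.Finite.mem_toFinset] at hσ
    obtain ⟨hσ, rfl⟩ := hσ
    exact hσ.compatible_diagonalTrace hB

theorem Zpara_succ_eq_iterate_transfer (hA : A ⊆ Icc 1 m) (k : ℕ) :
    ∀ B ⊆ Icc 1 m, Zpara m (k + 1) A B = (-1) ^ #A * (transfer m)^[k] (Pi.single A 1) B := by
  induction k with
  | zero =>
    intro B hB
    rw [Zpara_one hA hB, Function.iterate_zero_apply, Pi.single_apply]
    split_ifs <;> simp
  | succ k ih =>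
    intro B hB
    rw [Zpara_succ (by omega) hB,
      transfer_congr (g := ((-1) ^ #A : ℤ) • (transfer m)^[k] (Pi.single A 1)) (by simpa using ih),
      map_zsmul, Function.iterate_succ_apply']
    rfl

theorem coeff_Gser (hA : A ⊆ Icc 1 m) (k : ℕ) :
    coeff k (Gser m A) = (transfer m)^[k] (Pi.single A 1) A := by
  rw [Gser, coeff_mk]
  rcases k with _ | k
  · simp
  · rw [if_neg k.succ_ne_zero, Zpara_succ_eq_iterate_transfer hA _ A hA, ← mul_assoc,
      ← mul_pow, neg_one_mul, neg_neg, one_pow, one_mul]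

end Zpara

theorem mk_mul_eq_of_recurrence (c : ℕ → ℤ)
    (hinit : (List.range 9).map c = [1, 0, 0, 0, 1, 1, 0, 0, 0])
    (hrec : ∀ k, c (k + 9) + c (k + 6) = c (k + 5) + c (k + 2)) :
    PowerSeries.mk c * ((1 + X ^ 3) * (1 - X ^ 4)) = 1 + X ^ 3 + X ^ 5 := by
  simp only [List.range_succ, List.range_zero, List.map_cons, List.map_nil,
    List.nil_append, List.cons_append, List.cons.injEq, and_true] at hinit
  obtain ⟨c0, c1, c2, c3, c4, c5, c6, c7, c8⟩ := hinit
  rw [show (1 + X ^ 3) * (1 - X ^ 4) = (1 : ℤ⟦X⟧) + X ^ 3 - X ^ 4 - X ^ 7 by ring]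
  ext k
  simp only [mul_sub, mul_add, mul_one, map_sub, map_add, coeff_mul_X_pow', coeff_mk, coeff_one,
    coeff_X_pow]
  rcases Nat.lt_or_ge k 9 with hk | hk
  · interval_cases k <;> simp [*]
  · obtain ⟨j, rfl⟩ := Nat.exists_eq_add_of_le' hk
    rw [if_pos (by omega), if_pos (by omega), if_pos (by omega), if_neg (by omega),
      if_neg (by omega), if_neg (by omega), show j + 9 - 3 = j + 6 by omega,
      show j + 9 - 4 = j + 5 by omega, show j + 9 - 7 = j + 2 by omega]
    linarith [hrec j]

theorem transfer_four_recurrence :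
    ∀ a ∈ Icc 1 4, ∀ B ∈ (Icc 1 4).powerset,
      (transfer 4)^[9] (Pi.single {a} 1) B + (transfer 4)^[6] (Pi.single {a} 1) B =
        (transfer 4)^[5] (Pi.single {a} 1) B + (transfer 4)^[2] (Pi.single {a} 1) B := by
  decide +kernel

theorem transfer_four_initial :
    ∀ a ∈ Icc 1 4, (List.range 9).map (fun k => (transfer 4)^[k] (Pi.single {a} 1) {a}) =
      [1, 0, 0, 0, 1, 1, 0, 0, 0] := by
  decide +kernel

/-- For `m = 4` and every singleton `A = {a}` with
`a ∈ {1,2,3,4}`, `G_{A,A}(t)·(1 + t³)(1 − t⁴) = 1 + t³ + t⁵` in `ℤ[[t]]`. -/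
theorem Gser_singleton (a : ℕ) (ha : a ∈ ({1, 2, 3, 4} : Finset ℕ)) :
    Gser 4 {a} *
        ((1 + PowerSeries.X ^ 3) * (1 - PowerSeries.X ^ 4)) =
      1 + PowerSeries.X ^ 3 + PowerSeries.X ^ 5 := by
  have hA : {a} ⊆ Icc 1 4 := by fin_cases ha <;> decide
  have ha' : a ∈ Icc 1 4 := singleton_subset_iff.1 hA
  have hG : Gser 4 {a} = PowerSeries.mk fun k => (transfer 4)^[k] (Pi.single {a} 1) {a} :=
    PowerSeries.ext fun k => by rw [coeff_Gser hA, coeff_mk]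
  rw [hG]
  exact mk_mul_eq_of_recurrence _ (transfer_four_initial a ha') fun k =>
    iterate_transfer_add_eq (fun B hB => transfer_four_recurrence a ha' B (mem_powerset.2 hB)) k
      {a} hA
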